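/- Let m, m̃ : ℝ² → S² be admissible configurations related by m(r) = S m̃(R r) with R, S ∈ O(2) (S acting on the horizontal spin components), and let D, D̃ ∈ ℝ^{2×2} be spiralization tensors related by D = (det S) · S D̃ R. Then the total DMI energies agree: ∫_{ℝ²} D : L(m) dr = ∫_{ℝ²} D̃ : L(m̃) dr̃. -/

import Mathlib

open MeasureTheory Real Matrix Filter

noncomputable section

/-- The plane `ℝ²`. -/
abbrev Plane : Type := ℝ × ℝ

/-- Spin vectors in `ℝ³`. -/
abbrev Spin : Type := Fin 3 → ℝ

/-- Squared Euclidean length of a spin vector. -/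
def sq3 (v : Spin) : ℝ := ∑ i : Fin 3, v i ^ 2

/-- The vertical unit vector `ê_z`. -/
def ez : Spin := ![0, 0, 1]

/-- Partial derivative in the `x`-direction. -/
def pdx (m : Plane → Spin) (r : Plane) : Spin := fderiv ℝ m r (1, 0)

/-- Partial derivative in the `y`-direction. -/
def pdy (m : Plane → Spin) (r : Plane) : Spin := fderiv ℝ m r (0, 1)

/-- Partial derivative in direction `ν ∈ {x, y}`. -/
def pd (ν : Fin 2) (m : Plane → Spin) (r : Plane) : Spin :=
  if ν = 0 then pdx m r else pdy m r

/-- `|∇m|² = |∂ₓ m|² + |∂ᵧ m|²` (Euclidean norms). -/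
def gradSq (m : Plane → Spin) (r : Plane) : ℝ := sq3 (pdx m r) + sq3 (pdy m r)

/-- An admissible configuration: a smooth map `ℝ² → S² ⊂ ℝ³` tending to `ê_z`
at infinity, with square-integrable gradient and integrable `1 - m_z`. -/
structure Admissible (m : Plane → Spin) : Prop where
  smooth : ContDiff ℝ (⊤ : ℕ∞) m
  sphere : ∀ r, sq3 (m r) = 1
  decay : Tendsto m (cocompact Plane) (nhds ez)
  grad_sq_integrable : Integrable (gradSq m)
  zeeman_integrable : Integrable fun r : Plane => 1 - m r 2

/-- The topological charge `Q(m) = (1/4π) ∫ m · (∂ₓ m × ∂ᵧ m)`. -/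
def topCharge (m : Plane → Spin) : ℝ :=
  (1 / (4 * π)) * ∫ r : Plane, m r ⬝ᵥ (crossProduct (pdx m r) (pdy m r))

/-- The 2D Levi-Civita symbol. -/
def lc : Fin 2 → Fin 2 → ℝ := ![![0, 1], ![-1, 0]]

/-- The 2×2 chirality tensor `L(m)` of Lifshitz invariants,
`L_{μν}(m) = Σ_κ ε_{μκ} (m_z ∂_ν m_κ − m_κ ∂_ν m_z)`. -/
def chirality (m : Plane → Spin) (r : Plane) : Matrix (Fin 2) (Fin 2) ℝ :=
  Matrix.of fun μ ν : Fin 2 => ∑ κ : Fin 2,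
    lc μ κ * (m r 2 * pd ν m r κ.castSucc - m r κ.castSucc * pd ν m r 2)

/-- Frobenius inner product of 2×2 matrices. -/
def frob (A B : Matrix (Fin 2) (Fin 2) ℝ) : ℝ := ∑ μ : Fin 2, ∑ ν : Fin 2, A μ ν * B μ ν

/-- Squared Frobenius norm `|D|² = D : D`. -/
def frobSq (D : Matrix (Fin 2) (Fin 2) ℝ) : ℝ := frob D D

/-- The DMI energy density `e_DM(D; m) = D : L(m)`. -/
def eDM (D : Matrix (Fin 2) (Fin 2) ℝ) (m : Plane → Spin) (r : Plane) : ℝ :=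
  frob D (chirality m r)

/-- The micromagnetic energy functional. -/
def energy (J B K : ℝ) (D : Matrix (Fin 2) (Fin 2) ℝ) (m : Plane → Spin) : ℝ :=
  ∫ r : Plane,
    (J / 2) * gradSq m r + eDM D m r + B * (1 - m r 2) + K * ((m r 2) ^ 2 - 1)

/-- The least energy `E_Q` over the homotopy class of charge `Q`. -/
def leastEnergy (J B K : ℝ) (D : Matrix (Fin 2) (Fin 2) ℝ) (q : ℤ) : ℝ :=
  sInf {e : ℝ | ∃ m, Admissible m ∧ topCharge m = (q : ℝ) ∧ energy J B K D m = e}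

/-- Membership in `O(2)`. -/
def IsO2 (A : Matrix (Fin 2) (Fin 2) ℝ) : Prop := Aᵀ * A = 1

/-- Action of `S ∈ O(2)` on the horizontal spin components, fixing `m_z`. -/
def spinAct (S : Matrix (Fin 2) (Fin 2) ℝ) (v : Spin) : Spin :=
  ![S 0 0 * v 0 + S 0 1 * v 1, S 1 0 * v 0 + S 1 1 * v 1, v 2]

/-- Action of `R ∈ O(2)` on the plane. -/
def planeAct (R : Matrix (Fin 2) (Fin 2) ℝ) (r : Plane) : Plane :=
  (R 0 0 * r.1 + R 0 1 * r.2, R 1 0 * r.1 + R 1 1 * r.2)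

/-- The Belavin–Polyakov core profile. -/
def mcore (r : Plane) : Spin :=
  ![-2 * r.2 / (r.1 ^ 2 + r.2 ^ 2 + 1), 2 * r.1 / (r.1 ^ 2 + r.2 ^ 2 + 1),
    (r.1 ^ 2 + r.2 ^ 2 - 1) / (r.1 ^ 2 + r.2 ^ 2 + 1)]

/-- Reflection in horizontal spin space, `m̄ = (m_x, −m_y, m_z)`. -/
def reflectSpin (m : Plane → Spin) (r : Plane) : Spin := ![m r 0, -m r 1, m r 2]


/-! ### Auxiliary material for the DMI transformation theorem -/

/-- The 2×2 symplectic/Levi-Civita matrix. -/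
def epsM : Matrix (Fin 2) (Fin 2) ℝ := !![0, 1; -1, 0]

lemma lc_eq_epsM (μ κ : Fin 2) : lc μ κ = epsM μ κ := by
  fin_cases μ <;> fin_cases κ <;> simp [lc, epsM]

lemma symp_conj (A : Matrix (Fin 2) (Fin 2) ℝ) : Aᵀ * epsM * A = A.det • epsM := by
  ext i j
  fin_cases i <;> fin_cases j <;>
    simp [epsM, Matrix.mul_apply, Fin.sum_univ_two, Matrix.det_fin_two] <;> ring

lemma eps_mul_o2 {S : Matrix (Fin 2) (Fin 2) ℝ} (hS : IsO2 S) :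
    epsM * S = S.det • (S * epsM) := by
  have h1 : S * Sᵀ = 1 := mul_eq_one_comm.mp hS
  calc epsM * S = (S * Sᵀ) * epsM * S := by rw [h1, Matrix.one_mul]
    _ = S * (Sᵀ * epsM * S) := by simp only [Matrix.mul_assoc]
    _ = S * (S.det • epsM) := by rw [symp_conj]
    _ = S.det • (S * epsM) := by rw [Matrix.mul_smul]

lemma det_sq_o2 {S : Matrix (Fin 2) (Fin 2) ℝ} (hS : IsO2 S) : S.det * S.det = 1 := by
  have := congrArg Matrix.det hS
  rwa [Matrix.det_mul, Matrix.det_transpose, Matrix.det_one] at this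

lemma frob_eq_trace (A B : Matrix (Fin 2) (Fin 2) ℝ) : frob A B = (Aᵀ * B).trace := by
  simp [frob, Matrix.trace, Matrix.mul_apply, Fin.sum_univ_two, Matrix.diag]
  ring

lemma frob_transform {R S : Matrix (Fin 2) (Fin 2) ℝ} (hR : IsO2 R) (hS : IsO2 S)
    (A B : Matrix (Fin 2) (Fin 2) ℝ) :
    frob (S.det • (S * A * R)) (S.det • (S * B * R)) = frob A B := by
  have h1 : R * Rᵀ = 1 := mul_eq_one_comm.mp hR
  rw [frob_eq_trace, frob_eq_trace, Matrix.transpose_smul, Matrix.smul_mul, Matrix.mul_smul,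
    smul_smul, det_sq_o2 hS, one_smul]
  rw [Matrix.transpose_mul, Matrix.transpose_mul]
  have : Rᵀ * (Aᵀ * Sᵀ) * (S * B * R) = Rᵀ * (Aᵀ * B * R) := by
    calc Rᵀ * (Aᵀ * Sᵀ) * (S * B * R) = Rᵀ * (Aᵀ * (Sᵀ * S) * (B * R)) := by
          simp only [Matrix.mul_assoc]
      _ = Rᵀ * (Aᵀ * B * R) := by rw [hS, Matrix.mul_one, Matrix.mul_assoc]
  rw [this, Matrix.trace_mul_comm, Matrix.mul_assoc, Matrix.mul_assoc, h1, Matrix.mul_one]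

/-- The raw (ε-free) chirality matrix. -/
def chirM (m : Plane → Spin) (r : Plane) : Matrix (Fin 2) (Fin 2) ℝ :=
  Matrix.of fun α β : Fin 2 => m r 2 * pd β m r α.castSucc - m r α.castSucc * pd β m r 2

lemma chirality_eq (m : Plane → Spin) (r : Plane) :
    chirality m r = epsM * chirM m r := by
  ext μ ν
  simp [chirality, chirM, Matrix.mul_apply, lc_eq_epsM]

/-- `spinAct S` as a continuous linear map. -/
def spinCLM (S : Matrix (Fin 2) (Fin 2) ℝ) : Spin →L[ℝ] Spin :=
  LinearMap.toContinuousLinearMap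
    { toFun := spinAct S
      map_add' := by
        intro u v; funext i
        fin_cases i <;> simp [spinAct] <;> ring
      map_smul' := by
        intro c v; funext i
        fin_cases i <;> simp [spinAct] <;> ring }

lemma spinCLM_apply (S : Matrix (Fin 2) (Fin 2) ℝ) (v : Spin) :
    spinCLM S v = spinAct S v := rfl

/-- `planeAct R` as a continuous linear map. -/
def planeCLM (R : Matrix (Fin 2) (Fin 2) ℝ) : Plane →L[ℝ] Plane :=
  LinearMap.toContinuousLinearMap
    { toFun := planeAct R
      map_add' := by
        intro u v; simp [planeAct, Prod.ext_iff]; constructor <;> ring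
      map_smul' := by
        intro c v; simp [planeAct, Prod.ext_iff, smul_eq_mul]; constructor <;> ring }

lemma planeCLM_apply (R : Matrix (Fin 2) (Fin 2) ℝ) (v : Plane) :
    planeCLM R v = planeAct R v := rfl

lemma pd_transform (R S : Matrix (Fin 2) (Fin 2) ℝ) {mt : Plane → Spin}
    (hmt : ContDiff ℝ (⊤ : ℕ∞) mt) (ν : Fin 2) (r : Plane) :
    pd ν (fun r => spinAct S (mt (planeAct R r))) r
      = spinAct S (R 0 ν • pd 0 mt (planeAct R r) + R 1 ν • pd 1 mt (planeAct R r)) := by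
  have hd1 : DifferentiableAt ℝ mt (planeAct R r) := (hmt.differentiable (by simp)) _
  have h3 : HasFDerivAt (⇑(planeCLM R)) (planeCLM R) r := (planeCLM R).hasFDerivAt
  have h2 : HasFDerivAt mt (fderiv ℝ mt (planeAct R r)) (planeCLM R r) :=
    hd1.hasFDerivAt
  have H : HasFDerivAt (fun r => spinAct S (mt (planeAct R r)))
      ((spinCLM S).comp ((fderiv ℝ mt (planeAct R r)).comp (planeCLM R))) r :=
    (spinCLM S).hasFDerivAt.comp r (h2.comp r h3)
  have hfd : fderiv ℝ (fun r => spinAct S (mt (planeAct R r))) r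
      = ((spinCLM S).comp ((fderiv ℝ mt (planeAct R r)).comp (planeCLM R))) := H.fderiv
  have key : ∀ e : Plane,
      fderiv ℝ (fun r => spinAct S (mt (planeAct R r))) r e
        = spinAct S ((planeAct R e).1 • pd 0 mt (planeAct R r)
            + (planeAct R e).2 • pd 1 mt (planeAct R r)) := by
    intro e
    rw [hfd]
    have hdec : (planeCLM R) e
        = (planeAct R e).1 • ((1 : ℝ), (0 : ℝ)) + (planeAct R e).2 • ((0 : ℝ), (1 : ℝ)) := by
      simp [planeCLM_apply, Prod.ext_iff]
    have h4 : (fderiv ℝ mt (planeAct R r)) ((planeCLM R) e)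
        = (planeAct R e).1 • pdx mt (planeAct R r)
            + (planeAct R e).2 • pdy mt (planeAct R r) := by
      rw [hdec, map_add, _root_.map_smul, _root_.map_smul]
      rfl
    simp only [ContinuousLinearMap.comp_apply, h4, spinCLM_apply]
    simp [pd, pdx, pdy]
  fin_cases ν
  · simpa [pd, pdx, planeAct] using key (1, 0)
  · simpa [pd, pdy, planeAct] using key (0, 1)

lemma chirM_transform (R S : Matrix (Fin 2) (Fin 2) ℝ) {mt : Plane → Spin}
    (hmt : ContDiff ℝ (⊤ : ℕ∞) mt) (r : Plane) :
    chirM (fun r => spinAct S (mt (planeAct R r))) r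
      = S * chirM mt (planeAct R r) * R := by
  ext α β
  simp only [chirM, Matrix.of_apply, Matrix.mul_apply, Fin.sum_univ_two,
    pd_transform R S hmt]
  fin_cases α <;> fin_cases β <;>
    simp [spinAct, Pi.add_apply, Pi.smul_apply, smul_eq_mul] <;> ring

lemma chirality_transform (R S : Matrix (Fin 2) (Fin 2) ℝ) (hS : IsO2 S)
    {mt : Plane → Spin} (hmt : ContDiff ℝ (⊤ : ℕ∞) mt) (r : Plane) :
    chirality (fun r => spinAct S (mt (planeAct R r))) r
      = S.det • (S * chirality mt (planeAct R r) * R) := by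
  rw [chirality_eq, chirality_eq, chirM_transform R S hmt r]
  have h2 : epsM * (S * chirM mt (planeAct R r) * R)
      = (epsM * S) * chirM mt (planeAct R r) * R := by simp only [Matrix.mul_assoc]
  rw [h2, eps_mul_o2 hS, Matrix.smul_mul, Matrix.smul_mul]
  congr 1
  simp only [Matrix.mul_assoc]

lemma toLin_eq_planeAct (R : Matrix (Fin 2) (Fin 2) ℝ) (x : Plane) :
    (Matrix.toLin (Module.Basis.finTwoProd ℝ) (Module.Basis.finTwoProd ℝ) R) x = planeAct R x := by
  rw [Matrix.eta_fin_two R, Matrix.toLin_finTwoProd_apply]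
  simp [planeAct]

lemma isUnit_det_o2 {R : Matrix (Fin 2) (Fin 2) ℝ} (hR : IsO2 R) : IsUnit R.det :=
  IsUnit.of_mul_eq_one _ (det_sq_o2 hR)

lemma abs_det_o2 {R : Matrix (Fin 2) (Fin 2) ℝ} (hR : IsO2 R) : |R.det| = 1 := by
  rcases mul_self_eq_one_iff.mp (det_sq_o2 hR) with h | h <;> simp [h]

lemma measurePreserving_planeAct {R : Matrix (Fin 2) (Fin 2) ℝ} (hR : IsO2 R) :
    MeasurePreserving (planeAct R) (volume : Measure Plane) volume := by
  have hdet : R.det ≠ 0 := (isUnit_det_o2 hR).ne_zero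
  have hL : LinearMap.det (Matrix.toLin (Module.Basis.finTwoProd ℝ) (Module.Basis.finTwoProd ℝ) R)
      = R.det := LinearMap.det_toLin _ _
  have hfun : planeAct R
      = ⇑(Matrix.toLin (Module.Basis.finTwoProd ℝ) (Module.Basis.finTwoProd ℝ) R) :=
    funext fun x => (toLin_eq_planeAct R x).symm
  have hmap : Measure.map (planeAct R) (volume : Measure Plane) = volume := by
    rw [hfun, Measure.map_linearMap_addHaar_eq_smul_addHaar _ (by rw [hL]; exact hdet), hL,
      abs_inv, abs_det_o2 hR]
    simp
  refine ⟨?_, hmap⟩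
  have : Continuous (planeAct R) := by
    unfold planeAct; fun_prop
  exact this.measurable

lemma measurableEmbedding_planeAct {R : Matrix (Fin 2) (Fin 2) ℝ} (hR : IsO2 R) :
    MeasurableEmbedding (planeAct R) := by
  let e := (Matrix.toLinearEquiv (Module.Basis.finTwoProd ℝ) R (isUnit_det_o2 hR)).toContinuousLinearEquiv
  have hfun : planeAct R = ⇑(e.toHomeomorph) := by
    funext x
    rw [← toLin_eq_planeAct]
    rfl
  rw [hfun]
  exact e.toHomeomorph.measurableEmbedding

/-- If `m(r) = S m̃(R r)` with `R, S ∈ O(2)` and the spiralization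
tensors satisfy `D = (det S) · S D̃ R`, then the total DMI energies agree. -/
theorem dmi_energy_transform
    (R S : Matrix (Fin 2) (Fin 2) ℝ) (hR : IsO2 R) (hS : IsO2 S)
    (m mt : Plane → Spin) (hm : Admissible m) (hmt : Admissible mt)
    (hrel : ∀ r : Plane, m r = spinAct S (mt (planeAct R r)))
    (D Dt : Matrix (Fin 2) (Fin 2) ℝ) (hD : D = S.det • (S * Dt * R)) :
    ∫ r : Plane, eDM D m r = ∫ r : Plane, eDM Dt mt r := by
  have hmfun : m = fun r => spinAct S (mt (planeAct R r)) := funext hrel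
  have hpt : ∀ r, eDM D m r = eDM Dt mt (planeAct R r) := by
    intro r
    rw [eDM, eDM, hmfun, chirality_transform R S hS hmt.smooth r, hD]
    exact frob_transform hR hS Dt (chirality mt (planeAct R r))
  calc ∫ r : Plane, eDM D m r = ∫ r : Plane, eDM Dt mt (planeAct R r) := by simp_rw [hpt]
    _ = ∫ r : Plane, eDM Dt mt r :=
        (measurePreserving_planeAct hR).integral_comp (measurableEmbedding_planeAct hR) _

end
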